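/- arXiv:2410.04143 — 4 statements merged into one kernel-verified Lean document; each statement's English description precedes it below -/
import Mathlib

section
/- Let F : ℝ² → ℝ be a C² cumulative distribution function of a random vector (X₁,X₂) with everywhere positive values on (0,∞)², and suppose ∂²/∂x₁∂x₂ log F(x₁,x₂) > 0 for all (x₁,x₂) ∈ (0,∞)². Then for fixed x₂, the ratio x₁ ↦ F(x₁,x₂)/(F₁(x₁)·F₂(x₂)) is strictly decreasing in x₁ on (0,∞), where F₁(x₁) = lim_{x₂→∞} F(x₁,x₂) and F₂(x₂) = lim_{x₁→∞} F(x₁,x₂) are the marginal cdfs. -/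
open MeasureTheory Filter Set

/-!
Write `g = log F`. Positivity of the mixed partial of `g` makes `g` strictly supermodular on
`(0, ∞)²`, so for `a < b` the difference `s ↦ g(b, s) - g(a, s)` is strictly increasing;
it tends to `log F₁(b) - log F₁(a)`, hence `F(b, x₂) / F₁(b) < F(a, x₂) / F₁(a)`.
-/

theorem monotone_measure_Iic_toReal {α : Type*} [MeasurableSpace α] [Preorder α]
    (μ : Measure α) [IsFiniteMeasure μ] : Monotone fun a => (μ (Iic a)).toReal :=
  fun _ _ hab => ENNReal.toReal_mono (measure_ne_top _ _) (measure_mono (Iic_subset_Iic.2 hab))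

theorem strictMonoOn_of_forall_deriv_pos {D : Set ℝ} (hD : Convex ℝ D) {f : ℝ → ℝ}
    (hf' : ∀ x ∈ D, 0 < deriv f x) : StrictMonoOn f D :=
  strictMonoOn_of_deriv_pos hD
    (fun x hx => (differentiableAt_of_deriv_ne_zero (hf' x hx).ne').continuousAt.continuousWithinAt)
    fun x hx => hf' x (interior_subset hx)

theorem strictMonoOn_sub_of_deriv_deriv_pos {g : ℝ → ℝ → ℝ} {I J : Set ℝ}
    (hI : Convex ℝ I) (hJ : Convex ℝ J)
    (hg : ∀ t ∈ I, ∀ s ∈ J, DifferentiableAt ℝ (fun u => g u s) t)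
    (hmix : ∀ t ∈ I, ∀ s ∈ J, 0 < deriv (fun s => deriv (fun u => g u s) t) s)
    {a b : ℝ} (ha : a ∈ I) (hb : b ∈ I) (hab : a < b) :
    StrictMonoOn (fun s => g b s - g a s) J := by
  intro s hs s' hs' hss'
  have hderiv_mono : ∀ t ∈ I, deriv (fun u => g u s) t < deriv (fun u => g u s') t :=
    fun t ht => strictMonoOn_of_forall_deriv_pos hJ (hmix t ht) hs hs' hss'
  have hincr : g a s' - g a s < g b s' - g b s := by
    refine strictMonoOn_of_forall_deriv_pos (f := fun t => g t s' - g t s) hI (fun t ht => ?_)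
      ha hb hab
    rw [deriv_fun_sub (hg t ht s' hs') (hg t ht s hs), sub_pos]
    exact hderiv_mono t ht
  dsimp only
  linarith

theorem StrictMonoOn.lt_of_tendsto_atTop {f : ℝ → ℝ} {a L : ℝ} (hf : StrictMonoOn f (Ici a))
    (hL : Tendsto f atTop (nhds L)) : f a < L := by
  have hle : f (a + 1) ≤ L := ge_of_tendsto hL <| (eventually_ge_atTop (a + 1)).mono fun s hs =>
    hf.monotoneOn (by simp) (mem_Ici.2 (by linarith)) hs
  exact (hf (mem_Ici.2 le_rfl) (by simp) (lt_add_one a)).trans_le hle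

theorem mtp2_ratio_strict_anti_dim2
    (μ : Measure (ℝ × ℝ)) [IsProbabilityMeasure μ]
    (F : ℝ → ℝ → ℝ) (F₁ F₂ : ℝ → ℝ)
    (hF : ∀ x₁ x₂ : ℝ, F x₁ x₂ = (μ {p : ℝ × ℝ | p.1 ≤ x₁ ∧ p.2 ≤ x₂}).toReal)
    (hC2 : ContDiff ℝ 2 (fun p : ℝ × ℝ => F p.1 p.2))
    (hpos : ∀ x₁ x₂ : ℝ, 0 < x₁ → 0 < x₂ → 0 < F x₁ x₂)
    (hMTP2 : ∀ x₁ x₂ : ℝ, 0 < x₁ → 0 < x₂ →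
      0 < deriv (fun s => deriv (fun t => Real.log (F t s)) x₁) x₂)
    (hF₁ : ∀ x₁ : ℝ, Tendsto (fun x₂ => F x₁ x₂) atTop (nhds (F₁ x₁)))
    (hF₂ : ∀ x₂ : ℝ, Tendsto (fun x₁ => F x₁ x₂) atTop (nhds (F₂ x₂)))
    (x₂ : ℝ) (hx₂ : 0 < x₂) :
    StrictAntiOn (fun x₁ => F x₁ x₂ / (F₁ x₁ * F₂ x₂)) (Set.Ioi (0 : ℝ)) := by
  have hmono {t t' s s' : ℝ} (ht : t ≤ t') (hs : s ≤ s') : F t s ≤ F t' s' := by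
    rw [hF, hF]
    exact monotone_measure_Iic_toReal μ (Prod.mk_le_mk.2 ⟨ht, hs⟩)
  have hF₁pos {t : ℝ} (ht : 0 < t) : 0 < F₁ t :=
    (hpos t x₂ ht hx₂).trans_le
      (Monotone.ge_of_tendsto (fun _ _ => hmono le_rfl) (hF₁ t) x₂)
  have hF₂pos : 0 < F₂ x₂ :=
    (hpos 1 x₂ one_pos hx₂).trans_le
      (Monotone.ge_of_tendsto (fun _ _ h => hmono h le_rfl) (hF₂ x₂) 1)
  have hlog_diff : ∀ t ∈ Ioi (0 : ℝ), ∀ s ∈ Ioi (0 : ℝ),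
      DifferentiableAt ℝ (fun u => Real.log (F u s)) t := fun t ht s hs =>
    have hFt : DifferentiableAt ℝ (fun u => F u s) t := by
      exact (hC2.differentiable two_ne_zero (t, s)).comp t
        ((differentiableAt_id (𝕜 := ℝ)).prodMk (differentiableAt_const s))
    hFt.log (hpos t s ht hs).ne'
  intro a ha b hb hab
  have hFa := hpos a x₂ ha hx₂
  have hFb := hpos b x₂ hb hx₂
  have hF₁a := hF₁pos ha
  have hF₁b := hF₁pos hb
  have hgap : StrictMonoOn (fun s => Real.log (F b s) - Real.log (F a s)) (Ici x₂) :=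
    (strictMonoOn_sub_of_deriv_deriv_pos (convex_Ioi 0) (convex_Ioi 0) hlog_diff
      (fun t ht s hs => hMTP2 t s ht hs) ha hb hab).mono (Ici_subset_Ioi.2 hx₂)
  have hlim := hgap.lt_of_tendsto_atTop <|
    ((Real.continuousAt_log hF₁b.ne').tendsto.comp (hF₁ b)).sub
      ((Real.continuousAt_log hF₁a.ne').tendsto.comp (hF₁ a))
  have hratio : F b x₂ / F₁ b < F a x₂ / F₁ a := by
    rw [← Real.log_lt_log_iff (div_pos hFb hF₁b) (div_pos hFa hF₁a),
      Real.log_div hFb.ne' hF₁b.ne', Real.log_div hFa.ne' hF₁a.ne']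
    linarith
  simpa only [← div_div] using div_lt_div_of_pos_right hratio hF₂pos
end

section
/- Let F : ℝⁿ → ℝ be a C² strict MTP₂ cumulative distribution function, i.e. ∂²/∂xᵢ∂xⱼ log F(x) > 0 for all i ≠ j and all x, with F(x) > 0 everywhere. For events Aᵢ = {Xᵢ ≤ xᵢ} and any nonempty proper subset I ⊂ {1,…,n}, the ratio P(∩_{i=1}^n Aᵢ) / ( P(∩_{i∈I} Aᵢ) · P(∩_{i∉I} Aᵢ) ) is strictly decreasing in each coordinate xᵢ. -/
open MeasureTheory Filter Set Function Topology

/-!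
Put `L = log F` and, for `t < t'`, `G z = L (z[i ↦ t']) - L (z[i ↦ t])`. Positive mixed partials of
`L` make `G` strictly increasing in every coordinate other than `i`. Sending the coordinates outside
a block `J ∋ i` to `+∞` turns `F` into the marginal cdf `F_J`, so `G x` is strictly below the
corresponding increment of `log F_J`: `F / F_J` is strictly decreasing in `x i`. In the ratio of the
theorem one marginal does not depend on `x i` and the other is `F_J` for `J = I` or `J = Iᶜ`.
-/

theorem monotone_of_monotone_update {ι : Type*} [Finite ι] [DecidableEq ι] {π : ι → Type*}
    [∀ i, Preorder (π i)] {β : Type*} [Preorder β] {f : (∀ i, π i) → β}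
    (hf : ∀ z i, Monotone fun a => f (update z i a)) : Monotone f := by
  have := Fintype.ofFinite ι
  intro z z' hz
  suffices ∀ s : Finset ι, f z ≤ f (s.piecewise z' z) by simpa using this Finset.univ
  intro s
  induction s using Finset.induction_on with
  | empty => simp
  | insert j s _ ih =>
    rw [Finset.piecewise_insert]
    calc f z ≤ f (s.piecewise z' z) := ih
      _ = f (update (s.piecewise z' z) j (s.piecewise z' z j)) := by rw [update_eq_self]
      _ ≤ _ := hf _ j (s.piecewise_cases z' z (· ≤ z' j) le_rfl (hz j))

theorem strictMono_sub_of_deriv_deriv_pos {g : ℝ → ℝ → ℝ} (hg : ∀ s, Differentiable ℝ (g s))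
    (hmix : ∀ s t, 0 < deriv (fun s => deriv (g s) t) s) {t t' : ℝ} (htt : t < t') :
    StrictMono fun s => g s t' - g s t := by
  intro s s' hs
  have hgap : StrictMono fun τ => g s' τ - g s τ := strictMono_of_deriv_pos fun τ => by
    rw [deriv_fun_sub (hg s' τ) (hg s τ)]
    exact sub_pos.2 (strictMono_of_deriv_pos (hmix · τ) hs)
  linarith [hgap htt]

/-- For `L = log ∘ F` this is strict MTP₂ of `F`. -/
def MixedPartialsPos {ι : Type*} [DecidableEq ι] (L : (ι → ℝ) → ℝ) : Prop :=
  ∀ x i j, i ≠ j →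
    0 < deriv (fun s => deriv (fun t => L (update (update x j s) i t)) (x i)) (x j)

section
variable {ι : Type*} [Fintype ι] [DecidableEq ι] {L : (ι → ℝ) → ℝ}

theorem MixedPartialsPos.strictMono_update_sub (hmix : MixedPartialsPos L)
    (hL : Differentiable ℝ L) {i j : ι} (hij : i ≠ j) (z : ι → ℝ) {t t' : ℝ} (htt : t < t') :
    StrictMono fun a => L (update (update z j a) i t') - L (update (update z j a) i t) := by
  refine strictMono_sub_of_deriv_deriv_pos (g := fun s t => L (update (update z j s) i t))
    (fun s => ?_) (fun s τ => ?_) htt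
  · exact fun τ => hL.differentiableAt.comp τ (hasDerivAt_update _ i τ).differentiableAt
  · simpa [update_of_ne hij.symm, update_comm hij, update_idem]
      using hmix (update (update z j s) i τ) i j hij

theorem MixedPartialsPos.monotone_update_sub (hmix : MixedPartialsPos L)
    (hL : Differentiable ℝ L) (i : ι) {t t' : ℝ} (htt : t < t') :
    Monotone fun z => L (update z i t') - L (update z i t) := by
  refine monotone_of_monotone_update fun z j => ?_
  rcases eq_or_ne i j with rfl | hij
  · simpa only [update_idem] using monotone_const
  · exact (hmix.strictMono_update_sub hL hij z htt).monotone

end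

section
variable {ι : Type*} [Finite ι] [DecidableEq ι]

theorem lt_of_tendsto_piecewise {G : (ι → ℝ) → ℝ} (hG : Monotone G) {J : Finset ι} {j : ι}
    (hj : j ∉ J) {x : ι → ℝ} (hGj : StrictMono fun a => G (update x j a)) {ℓ : ℝ}
    (hlim : Tendsto (fun m : ℕ => G (J.piecewise x fun _ => m)) atTop (𝓝 ℓ)) : G x < ℓ := by
  obtain ⟨C, hC⟩ := Finite.exists_le x
  obtain ⟨m, hm⟩ := exists_nat_gt C
  have hseq : Monotone fun m : ℕ => J.piecewise x fun _ => (m : ℝ) := fun _ _ hab =>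
    J.piecewise_le_piecewise le_rfl fun _ => Nat.cast_le.2 hab
  calc G x = G (update x j (x j)) := by rw [update_eq_self]
    _ < G (update x j m) := hGj ((hC j).trans_lt hm)
    _ ≤ G (J.piecewise x fun _ => m) := hG <| update_le_iff.2
        ⟨by rw [J.piecewise_eq_of_notMem _ _ hj], fun k _ =>
          J.le_piecewise_of_le_of_le le_rfl (fun k => (hC k).trans hm.le) k⟩
    _ ≤ ℓ := (hG.comp hseq).ge_of_tendsto hlim m

theorem tendsto_measure_Iic_piecewise (μ : Measure (ι → ℝ)) (J : Finset ι) (v : ι → ℝ) :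
    Tendsto (fun m : ℕ => μ (Iic (J.piecewise v fun _ => m))) atTop
      (𝓝 (μ {y | ∀ k ∈ J, y k ≤ v k})) := by
  have hmono : Monotone fun m : ℕ => Iic (J.piecewise v fun _ => (m : ℝ)) := fun _ _ hab =>
    Iic_subset_Iic.2 <| J.piecewise_le_piecewise le_rfl fun _ => Nat.cast_le.2 hab
  suffices h : ⋃ m : ℕ, Iic (J.piecewise v fun _ => (m : ℝ)) = {y | ∀ k ∈ J, y k ≤ v k} by
    rw [← h]
    exact tendsto_measure_iUnion_atTop hmono
  ext y
  simp only [mem_iUnion, mem_Iic, mem_ofPred_eq]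
  constructor
  · rintro ⟨m, hm⟩ k hk
    simpa [hk] using hm k
  · intro hy
    obtain ⟨C, hC⟩ := Finite.exists_le y
    obtain ⟨m, hm⟩ := exists_nat_ge C
    refine ⟨m, fun k => ?_⟩
    by_cases hk : k ∈ J
    · simpa [hk] using hy k hk
    · simpa [hk] using (hC k).trans hm
end

theorem strictAnti_cdf_div_marginal {ι : Type*} [Fintype ι] [DecidableEq ι]
    (μ : Measure (ι → ℝ)) [IsFiniteMeasure μ] {F : (ι → ℝ) → ℝ}
    (hF : ∀ x, F x = (μ (Iic x)).toReal) (hdiff : Differentiable ℝ F) (hpos : ∀ x, 0 < F x)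
    (hmix : MixedPartialsPos fun x => Real.log (F x)) {J : Finset ι} (hJ : J ≠ Finset.univ)
    {i : ι} (hi : i ∈ J) (x : ι → ℝ) :
    StrictAnti fun t => F (update x i t) / (μ {y | ∀ k ∈ J, y k ≤ update x i t k}).toReal := by
  intro t t' htt
  set M : ℝ → ℝ := fun τ => (μ {y | ∀ k ∈ J, y k ≤ update x i τ k}).toReal
  have hM τ : 0 < M τ := (hpos _).trans_le <| (hF _).trans_le <|
    ENNReal.toReal_mono (measure_ne_top μ _) (measure_mono fun y hy k _ => hy k)
  have hL : Differentiable ℝ fun x => Real.log (F x) := hdiff.log fun x => (hpos x).ne'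
  obtain ⟨j, hj⟩ : ∃ j, j ∉ J := by
    by_contra! h
    exact hJ (Finset.eq_univ_of_forall h)
  have hlim τ : Tendsto (fun m : ℕ => Real.log (F (update (J.piecewise x fun _ => m) i τ)))
      atTop (𝓝 (Real.log (M τ))) := by
    simp only [J.update_piecewise_of_mem _ _ hi, hF]
    exact (Real.continuousAt_log (hM τ).ne').tendsto.comp <|
      (ENNReal.tendsto_toReal (measure_ne_top μ _)).comp (tendsto_measure_Iic_piecewise μ J _)
  have hgap : Real.log (F (update x i t')) - Real.log (F (update x i t)) <
      Real.log (M t') - Real.log (M t) :=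
    lt_of_tendsto_piecewise (hmix.monotone_update_sub hL i htt) hj
      (hmix.strictMono_update_sub hL (ne_of_mem_of_not_mem hi hj) x htt)
      ((hlim t').sub (hlim t))
  rw [← Real.log_lt_log_iff (div_pos (hpos _) (hM t')) (div_pos (hpos _) (hM t)),
    Real.log_div (hpos _).ne' (hM t').ne', Real.log_div (hpos _).ne' (hM t).ne']
  linarith

theorem mtp2_ratio_strict_anti
    (n : ℕ) (μ : Measure (Fin n → ℝ)) [IsProbabilityMeasure μ]
    (F : (Fin n → ℝ) → ℝ)
    (hF : ∀ x : Fin n → ℝ, F x = (μ {y | ∀ i, y i ≤ x i}).toReal)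
    (hC2 : ContDiff ℝ 2 F)
    (hpos : ∀ x, 0 < F x)
    (hMTP2 : ∀ x : Fin n → ℝ, ∀ i j : Fin n, i ≠ j →
      0 < deriv (fun s => deriv
            (fun t => Real.log (F (Function.update (Function.update x j s) i t)))
            (x i)) (x j))
    (I : Finset (Fin n)) (hI : I.Nonempty) (hIp : I ≠ Finset.univ)
    (x : Fin n → ℝ) (i : Fin n) :
    StrictAnti (fun t : ℝ =>
      F (Function.update x i t) /
        ((μ {y | ∀ k ∈ I, y k ≤ Function.update x i t k}).toReal *
         (μ {y | ∀ k, k ∉ I → y k ≤ Function.update x i t k}).toReal)) := by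
  have hdiff := hC2.differentiable two_ne_zero
  have hmarg (J : Finset (Fin n)) (hiJ : i ∉ J) (t : ℝ) :
      {y : Fin n → ℝ | ∀ k ∈ J, y k ≤ update x i t k} = {y | ∀ k ∈ J, y k ≤ x k} := by
    ext y
    refine forall₂_congr fun k hk => ?_
    rw [update_of_ne (ne_of_mem_of_not_mem hk hiJ)]
  have hposJ (J : Finset (Fin n)) : 0 < (μ {y | ∀ k ∈ J, y k ≤ x k}).toReal :=
    (hpos x).trans_le <| (hF x).trans_le <|
      ENNReal.toReal_mono (measure_ne_top μ _) (measure_mono fun y hy k _ => hy k)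
  simp only [← Finset.mem_compl]
  by_cases hi : i ∈ I
  · simp only [hmarg Iᶜ (Finset.notMem_compl.2 hi), ← div_div]
    exact fun t t' htt => div_lt_div_of_pos_right
      (strictAnti_cdf_div_marginal μ hF hdiff hpos hMTP2 hIp hi x htt) (hposJ _)
  · have hIc : Iᶜ ≠ Finset.univ := by simpa [Finset.compl_eq_univ_iff] using hI.ne_empty
    simp only [hmarg I hi, mul_comm (μ {y | ∀ k ∈ I, y k ≤ x k}).toReal, ← div_div]
    exact fun t t' htt => div_lt_div_of_pos_right
      (strictAnti_cdf_div_marginal μ hF hdiff hpos hMTP2 hIc (Finset.mem_compl.2 hi) x htt)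
      (hposJ _)
end

section
/- Let F : ℝⁿ → ℝ be a C² strict MTP₂ cdf with everywhere positive values. Fix a nonempty proper subset I ⊂ {1,…,n}, write x = (x₁, x₂) with x₁ the coordinates in I, and let F₁, F₂ be the corresponding marginal cdfs. Then for all x ≤ b (componentwise), F(x) ≥ r(b) · F₁(x₁) · F₂(x₂), where r(b) = F(b)/(F₁(b₁)·F₂(b₂)). -/
/-!
Strict MTP₂ says that the partial derivatives of `log F` increase in every other coordinate, so
increments of `log F` along one coordinate increase with the base point; chaining such increments
gives the block supermodularity `F (x_I, y_J) F (y_I, x_J) ≤ F x F y` for `x ≤ y`, where `J` is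
the complement of `I`. Sending the coordinates outside one block to `+∞` turns this into
`F₁ x F (b_I, x_J) ≤ F x F₁ b` and, for the complementary block, `F₂ x F b ≤ F (b_I, x_J) F₂ b`;
multiplying the two eliminates `F (b_I, x_J)`.
-/

open MeasureTheory Filter Set Function Topology

section Supermodularity

variable {ι : Type*} [DecidableEq ι]

theorem monotone_of_monotone_update_s2 [Finite ι] {α β : Type*} [Preorder α] [Preorder β]
    {g : (ι → α) → β} (hg : ∀ w i, Monotone fun s => g (update w i s)) : Monotone g := by
  have := Fintype.ofFinite ι
  intro w w' hww
  suffices key : ∀ S : Finset ι, g w ≤ g (S.piecewise w' w) by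
    simpa using key Finset.univ
  intro S
  induction S using Finset.induction_on with
  | empty => simp
  | insert j S hjS ih =>
    refine ih.trans ?_
    rw [Finset.piecewise_insert]
    conv_lhs => rw [← update_eq_self j (S.piecewise w' w)]
    exact hg _ j (by simpa [Finset.piecewise_eq_of_notMem _ _ _ hjS] using hww j)

theorem piecewise_sub_piecewise_le {f : (ι → ℝ) → ℝ}
    (hf : ∀ i {a a' : ℝ}, a ≤ a' → Monotone fun w => f (update w i a') - f (update w i a))
    (S : Finset ι) {a a' w w' : ι → ℝ} (haa : a ≤ a') (hww : w ≤ w') :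
    f (S.piecewise a' w) - f (S.piecewise a w) ≤ f (S.piecewise a' w') - f (S.piecewise a w') := by
  induction S using Finset.induction_on generalizing w w' with
  | empty => simp
  | insert j S hjS ih =>
    have hstep := hf j (haa j) (S.piecewise_le_piecewise (le_refl a') hww)
    have hrest := ih (w := update w j (a j)) (w' := update w' j (a j))
      (update_le_update_iff.2 ⟨le_rfl, fun k _ => hww k⟩)
    simp only [Finset.piecewise_insert, Finset.update_piecewise_of_notMem (hi := hjS)]
      at hstep hrest ⊢
    linarith

theorem piecewise_add_piecewise_le {f : (ι → ℝ) → ℝ}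
    (hf : ∀ i {a a' : ℝ}, a ≤ a' → Monotone fun w => f (update w i a') - f (update w i a))
    (S : Finset ι) {x y : ι → ℝ} (hxy : x ≤ y) :
    f (S.piecewise x y) + f (S.piecewise y x) ≤ f x + f y := by
  have h := piecewise_sub_piecewise_le hf S hxy hxy
  rw [Finset.piecewise_same, Finset.piecewise_same] at h
  linarith

noncomputable def partialDeriv (f : (ι → ℝ) → ℝ) (i : ι) (w : ι → ℝ) : ℝ :=
  deriv (fun t => f (update w i t)) (w i)

theorem hasDerivAt_comp_update {f : (ι → ℝ) → ℝ} {w : ι → ℝ} {i : ι} {t : ℝ}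
    (hf : DifferentiableAt ℝ (fun t => f (update w i t)) t) :
    HasDerivAt (fun t => f (update w i t)) (partialDeriv f i (update w i t)) t := by
  simpa [partialDeriv] using hf.hasDerivAt

theorem strictMono_partialDeriv_update {f : (ι → ℝ) → ℝ}
    (hf : ∀ (x : ι → ℝ) (i j : ι), i ≠ j →
      0 < deriv (fun s => deriv (fun t => f (update (update x j s) i t)) (x i)) (x j))
    {i j : ι} (hij : i ≠ j) (w : ι → ℝ) :
    StrictMono fun s => partialDeriv f i (update w j s) :=
  strictMono_of_deriv_pos fun s => by
    simpa [partialDeriv, update_of_ne hij] using hf (update w j s) i j hij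

theorem monotone_update_sub_update_of_ne {f : (ι → ℝ) → ℝ}
    (hdiff : ∀ w j, Differentiable ℝ fun t => f (update w j t))
    (hmix : ∀ w {i j}, i ≠ j → Monotone fun s => partialDeriv f i (update w j s))
    {i j : ι} (hij : i ≠ j) {a a' : ℝ} (haa : a ≤ a') (w : ι → ℝ) :
    Monotone fun s => f (update (update w j s) i a') - f (update (update w j s) i a) := by
  simp only [update_comm hij.symm]
  have hderiv : ∀ s, HasDerivAt
      (fun s => f (update (update w i a') j s) - f (update (update w i a) j s))
      (partialDeriv f j (update (update w i a') j s)
        - partialDeriv f j (update (update w i a) j s)) s :=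
    fun s => (hasDerivAt_comp_update (hdiff _ j s)).sub (hasDerivAt_comp_update (hdiff _ j s))
  refine monotone_of_deriv_nonneg (fun s => (hderiv s).differentiableAt) fun s => ?_
  rw [(hderiv s).deriv, sub_nonneg, update_comm hij, update_comm hij]
  exact hmix (update w j s) hij.symm haa

theorem monotone_update_sub_update [Finite ι] {f : (ι → ℝ) → ℝ}
    (hdiff : ∀ w j, Differentiable ℝ fun t => f (update w j t))
    (hmix : ∀ w {i j}, i ≠ j → Monotone fun s => partialDeriv f i (update w j s))
    (i : ι) {a a' : ℝ} (haa : a ≤ a') :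
    Monotone fun w => f (update w i a') - f (update w i a) := by
  refine monotone_of_monotone_update_s2 fun w j => ?_
  rcases eq_or_ne i j with rfl | hij
  · simpa using monotone_const
  · exact monotone_update_sub_update_of_ne hdiff hmix hij haa w

theorem piecewise_add_piecewise_le_of_deriv_deriv_pos [Finite ι] {f : (ι → ℝ) → ℝ}
    (hdiff : ∀ w j, Differentiable ℝ fun t => f (update w j t))
    (hf : ∀ (x : ι → ℝ) (i j : ι), i ≠ j →
      0 < deriv (fun s => deriv (fun t => f (update (update x j s) i t)) (x i)) (x j))
    (S : Finset ι) {x y : ι → ℝ} (hxy : x ≤ y) :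
    f (S.piecewise x y) + f (S.piecewise y x) ≤ f x + f y :=
  piecewise_add_piecewise_le (monotone_update_sub_update hdiff
    fun w _ _ hij => (strictMono_partialDeriv_update hf hij w).monotone) S hxy

theorem piecewise_mul_piecewise_le_of_deriv_deriv_log_pos [Finite ι] {F : (ι → ℝ) → ℝ}
    (hpos : ∀ x, 0 < F x)
    (hdiff : ∀ w j, Differentiable ℝ fun t => Real.log (F (update w j t)))
    (hF : ∀ (x : ι → ℝ) (i j : ι), i ≠ j →
      0 < deriv (fun s => deriv (fun t => Real.log (F (update (update x j s) i t))) (x i)) (x j))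
    (S : Finset ι) {x y : ι → ℝ} (hxy : x ≤ y) :
    F (S.piecewise x y) * F (S.piecewise y x) ≤ F x * F y := by
  have h := piecewise_add_piecewise_le_of_deriv_deriv_pos (f := fun z => Real.log (F z))
    hdiff hF S hxy
  rwa [← Real.log_mul (hpos _).ne' (hpos _).ne', ← Real.log_mul (hpos _).ne' (hpos _).ne',
    Real.log_le_log_iff (mul_pos (hpos _) (hpos _)) (mul_pos (hpos _) (hpos _))] at h

end Supermodularity

section Marginals

variable {ι : Type*} [DecidableEq ι] [Finite ι]

theorem marginal_mul_le_mul_marginal {F G : (ι → ℝ) → ℝ} {s : Finset ι}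
    (hF : ∀ x y, x ≤ y → F (s.piecewise x y) * F (s.piecewise y x) ≤ F x * F y)
    (hG : ∀ z, Tendsto (fun M : ℝ => F (s.piecewise z fun _ => M)) atTop (𝓝 (G z)))
    {x y : ι → ℝ} (hxy : x ≤ y) :
    G x * F (s.piecewise y x) ≤ F x * G y := by
  refine le_of_tendsto_of_tendsto ((hG x).mul_const _) ((hG y).const_mul _) ?_
  filter_upwards [eventually_all.2 fun i => eventually_ge_atTop (x i)] with M hM
  simpa using hF x _ (s.le_piecewise_of_le_of_le hxy hM)

theorem tendsto_measure_piecewise_atTop (μ : Measure (ι → ℝ)) [IsFiniteMeasure μ]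
    (s : Finset ι) (z : ι → ℝ) :
    Tendsto (fun M : ℝ => (μ {y | ∀ i, y i ≤ s.piecewise z (fun _ => M) i}).toReal) atTop
      (𝓝 (μ {y | ∀ k ∈ s, y k ≤ z k}).toReal) := by
  have hmono : Monotone fun M : ℝ => {y : ι → ℝ | ∀ i, y i ≤ s.piecewise z (fun _ => M) i} :=
    fun M M' hM y hy i => (hy i).trans (s.piecewise_le_piecewise (le_refl z) (fun _ => hM) i)
  have hunion : ⋃ M : ℝ, {y : ι → ℝ | ∀ i, y i ≤ s.piecewise z (fun _ => M) i}
      = {y | ∀ k ∈ s, y k ≤ z k} := by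
    ext y
    simp only [mem_iUnion, mem_ofPred_eq]
    refine ⟨fun ⟨M, hM⟩ k hk => by simpa [hk] using hM k, fun hy => ?_⟩
    obtain ⟨M, hM⟩ := Finite.exists_le y
    exact ⟨M, fun i => by by_cases hi : i ∈ s <;> simp [hi, hy, hM]⟩
  have h := tendsto_measure_iUnion_atTop (μ := μ) hmono
  rw [hunion] at h
  exact (ENNReal.tendsto_toReal (measure_ne_top μ _)).comp h

end Marginals

theorem mtp2_cdf_lower_bound_general
    (n : ℕ) (μ : Measure (Fin n → ℝ)) [IsProbabilityMeasure μ]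
    (F : (Fin n → ℝ) → ℝ)
    (hF : ∀ x : Fin n → ℝ, F x = (μ {y | ∀ i, y i ≤ x i}).toReal)
    (hC2 : ContDiff ℝ 2 F)
    (hpos : ∀ x, 0 < F x)
    (hMTP2 : ∀ x : Fin n → ℝ, ∀ i j : Fin n, i ≠ j →
      0 < deriv (fun s => deriv
            (fun t => Real.log (F (Function.update (Function.update x j s) i t)))
            (x i)) (x j))
    (I : Finset (Fin n))
    (F₁ F₂ : (Fin n → ℝ) → ℝ)
    (hF₁ : ∀ x : Fin n → ℝ, F₁ x = (μ {y | ∀ k ∈ I, y k ≤ x k}).toReal)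
    (hF₂ : ∀ x : Fin n → ℝ, F₂ x = (μ {y | ∀ k, k ∉ I → y k ≤ x k}).toReal)
    (x b : Fin n → ℝ) (hxb : ∀ i, x i ≤ b i) :
    F x ≥ (F b / (F₁ b * F₂ b)) * (F₁ x * F₂ x) := by
  have hsep : ∀ w i, Differentiable ℝ fun t => Real.log (F (update w i t)) := fun w i t =>
    ((hC2.differentiable (by norm_num) _).comp t
      (hasDerivAt_update w i t).differentiableAt).log (hpos _).ne'
  have hTP2 := piecewise_mul_piecewise_le_of_deriv_deriv_log_pos hpos hsep hMTP2
  have hG₁ : ∀ z, Tendsto (fun M : ℝ => F (I.piecewise z fun _ => M)) atTop (𝓝 (F₁ z)) :=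
    fun z => by simpa [hF, hF₁] using tendsto_measure_piecewise_atTop μ I z
  have hG₂ : ∀ z, Tendsto (fun M : ℝ => F (Iᶜ.piecewise z fun _ => M)) atTop (𝓝 (F₂ z)) :=
    fun z => by simpa [hF, hF₂] using tendsto_measure_piecewise_atTop μ Iᶜ z
  set v := I.piecewise b x
  have h₁ : F₁ x * F v ≤ F x * F₁ b := marginal_mul_le_mul_marginal (fun _ _ => hTP2 I) hG₁ hxb
  have h₂ : F₂ x * F b ≤ F v * F₂ b := by
    have h := marginal_mul_le_mul_marginal (fun _ _ => hTP2 Iᶜ) hG₂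
      (I.piecewise_le_of_le_of_le le_rfl hxb : v ≤ b)
    have hv : F₂ v = F₂ x := by
      simp +contextual [hF₂, v, Finset.piecewise_eq_of_notMem]
    rwa [hv, Finset.piecewise_compl, Finset.piecewise_idem_left, Finset.piecewise_same] at h
  have hF₁b : 0 ≤ F₁ b := hF₁ b ▸ ENNReal.toReal_nonneg
  have hF₂b : 0 ≤ F₂ b := hF₂ b ▸ ENNReal.toReal_nonneg
  have hF₁x : 0 ≤ F₁ x := hF₁ x ▸ ENNReal.toReal_nonneg
  rcases (mul_nonneg hF₁b hF₂b).eq_or_lt with h0 | h0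
  · simpa [← h0] using (hpos x).le
  · rw [ge_iff_le, div_mul_eq_mul_div, div_le_iff₀ h0]
    nlinarith [mul_le_mul_of_nonneg_left h₂ hF₁x, mul_le_mul_of_nonneg_right h₁ hF₂b]

theorem mtp2_cdf_lower_bound
    (n : ℕ) (μ : Measure (Fin n → ℝ)) [IsProbabilityMeasure μ]
    (F : (Fin n → ℝ) → ℝ)
    (hF : ∀ x : Fin n → ℝ, F x = (μ {y | ∀ i, y i ≤ x i}).toReal)
    (hC2 : ContDiff ℝ 2 F)
    (hpos : ∀ x, 0 < F x)
    (hMTP2 : ∀ x : Fin n → ℝ, ∀ i j : Fin n, i ≠ j →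
      0 < deriv (fun s => deriv
            (fun t => Real.log (F (Function.update (Function.update x j s) i t)))
            (x i)) (x j))
    (I : Finset (Fin n)) (hI : I.Nonempty) (hIp : I ≠ Finset.univ)
    (F₁ F₂ : (Fin n → ℝ) → ℝ)
    (hF₁ : ∀ x : Fin n → ℝ, F₁ x = (μ {y | ∀ k ∈ I, y k ≤ x k}).toReal)
    (hF₂ : ∀ x : Fin n → ℝ, F₂ x = (μ {y | ∀ k, k ∉ I → y k ≤ x k}).toReal)
    (x b : Fin n → ℝ) (hxb : ∀ i, x i ≤ b i) :
    F x ≥ (F b / (F₁ b * F₂ b)) * (F₁ x * F₂ x) :=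
  mtp2_cdf_lower_bound_general n μ F hF hC2 hpos hMTP2 I F₁ F₂ hF₁ hF₂ x b hxb
end

section
/- Let F be a C² strict MTP₂ cdf on (0,∞)ⁿ with everywhere positive density f, and let F₁, F₂ denote the marginal cdfs corresponding to a split of coordinates into index sets I and its complement. Then r(x) := F(x)/(F₁(x₁)·F₂(x₂)) > 1 for all x ∈ (0,∞)ⁿ. -/
/-!
Strict MTP₂ says that the mixed partials of `log F` are positive, so `log F` has strictly
increasing differences in every pair of coordinates on the positive orthant; changing one
coordinate at a time, it also has them across the blocks `I` and `Iᶜ`. Hence the rectangular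
increment `log F b + log F x - log F (x_I, b_Iᶜ) - log F (b_I, x_Iᶜ)` is positive and
nondecreasing in `b ≥ x`. As `b → ∞` it tends to `log F x - log F₁ x - log F₂ x`, which is
therefore positive.
-/

open MeasureTheory Filter Set Function Topology

theorem monotoneOn_of_le_update {ι α β : Type*} [Fintype ι] [DecidableEq ι] [Preorder α]
    [Preorder β] {U : Set (ι → α)} (hU : IsUpperSet U) {φ : (ι → α) → β}
    (hφ : ∀ p ∈ U, ∀ i a, p i ≤ a → φ p ≤ φ (update p i a)) : MonotoneOn φ U := by
  intro p hp q _ hpq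
  suffices h : ∀ S : Finset ι, φ p ≤ φ (S.piecewise q p) by simpa using h Finset.univ
  intro S
  induction S using Finset.induction_on with
  | empty => simp
  | insert i S hi ih =>
    rw [Finset.piecewise_insert]
    refine ih.trans (hφ _ (hU (Finset.le_piecewise_of_le_of_le _ hpq le_rfl) hp) i _ ?_)
    simpa [hi] using hpq i

theorem sub_lt_sub_of_deriv_deriv_pos {g : ℝ → ℝ → ℝ} {S J : Set ℝ} (hS : Convex ℝ S)
    (hJ : Convex ℝ J) (hg : ∀ σ ∈ S, ∀ u ∈ J, DifferentiableAt ℝ (g σ) u)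
    (hg' : ∀ σ ∈ S, ∀ u ∈ J, 0 < deriv (fun σ => deriv (g σ) u) σ)
    {s s' t t' : ℝ} (hs : s ∈ S) (hs' : s' ∈ S) (hss' : s < s') (ht : t ∈ J) (ht' : t' ∈ J)
    (htt' : t < t') :
    g s t' - g s t < g s' t' - g s' t := by
  have hmono : ∀ u ∈ J, StrictMonoOn (fun σ => deriv (g σ) u) S := fun u hu =>
    strictMonoOn_of_deriv_pos hS
      (fun σ hσ => (differentiableAt_of_deriv_ne_zero
        (hg' σ hσ u hu).ne').continuousAt.continuousWithinAt)
      fun σ hσ => hg' σ (interior_subset hσ) u hu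
  have hdiff : StrictMonoOn (fun u => g s' u - g s u) J :=
    strictMonoOn_of_deriv_pos hJ
      (fun u hu => ((hg s' hs' u hu).sub (hg s hs u hu)).continuousAt.continuousWithinAt)
      fun u hu => by
        have hu := interior_subset hu
        rw [deriv_fun_sub (hg s' hs' u hu) (hg s hs u hu), sub_pos]
        exact hmono u hu hs hs' hss'
  linarith [hdiff ht ht' htt']

section PositiveOrthant

variable {ι : Type*}

theorem isUpperSet_positiveOrthant : IsUpperSet {p : ι → ℝ | ∀ k, 0 < p k} :=
  fun _ _ hpq hp k => (hp k).trans_le (hpq k)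

theorem positiveOrthant_mem_nhds [Finite ι] {p : ι → ℝ} (hp : ∀ k, 0 < p k) :
    {q : ι → ℝ | ∀ k, 0 < q k} ∈ 𝓝 p :=
  eventually_all.2 fun k => ((continuous_apply k).tendsto p).eventually (lt_mem_nhds (hp k))

variable [DecidableEq ι]

theorem update_pos {p : ι → ℝ} (hp : ∀ k, 0 < p k) {j : ι} {a : ℝ} (ha : 0 < a) :
    ∀ k, 0 < update p j a k :=
  (forall_update_iff p fun _ y => 0 < y).2 ⟨ha, fun k _ => hp k⟩

theorem piecewise_pos {p q : ι → ℝ} (hp : ∀ k, 0 < p k) (hq : ∀ k, 0 < q k) (T : Finset ι) :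
    ∀ k, 0 < T.piecewise p q k :=
  fun k => T.piecewise_cases p q (0 < ·) (hp k) (hq k)

def HasStrictIncreasingDifferencesOnPos (A : (ι → ℝ) → ℝ) : Prop :=
  ∀ p : ι → ℝ, (∀ k, 0 < p k) → ∀ i j, i ≠ j → ∀ ⦃s s' t t' : ℝ⦄,
    0 < s → s < s' → 0 < t → t < t' →
    A (update (update p i s) j t') - A (update (update p i s) j t) <
      A (update (update p i s') j t') - A (update (update p i s') j t)

theorem hasStrictIncreasingDifferencesOnPos_of_mixed_deriv_pos [Fintype ι] {A : (ι → ℝ) → ℝ}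
    (hd : DifferentiableOn ℝ A {p | ∀ k, 0 < p k})
    (hM : ∀ p : ι → ℝ, (∀ k, 0 < p k) → ∀ i j, i ≠ j →
      0 < deriv (fun s => deriv (fun t => A (update (update p j s) i t)) (p i)) (p j)) :
    HasStrictIncreasingDifferencesOnPos A := by
  intro p hp i j hij s s' t t' hs hss' ht htt'
  have hpos : ∀ σ u : ℝ, 0 < σ → 0 < u → ∀ k, 0 < update (update p i σ) j u k :=
    fun σ u hσ hu => update_pos (update_pos hp hσ) hu
  refine sub_lt_sub_of_deriv_deriv_pos (g := fun σ u => A (update (update p i σ) j u))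
    (convex_Ioi 0) (convex_Ioi 0) (fun σ hσ u hu => ?_) (fun σ hσ u hu => ?_)
    hs (hs.trans hss') hss' ht (ht.trans htt') htt'
  · exact ((hd.differentiableAt (positiveOrthant_mem_nhds (hpos σ u hσ hu))).comp u
      (hasDerivAt_update _ j u).differentiableAt)
  · simpa [update_comm hij] using hM _ (hpos σ u hσ hu) j i hij.symm

theorem HasStrictIncreasingDifferencesOnPos.sub_le_sub {A : (ι → ℝ) → ℝ}
    (hA : HasStrictIncreasingDifferencesOnPos A) {p : ι → ℝ} (hp : ∀ k, 0 < p k) {i j : ι}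
    (hij : i ≠ j) {s s' t t' : ℝ} (hs : 0 < s) (hss' : s ≤ s') (ht : 0 < t) (htt' : t ≤ t') :
    A (update (update p i s) j t') - A (update (update p i s) j t) ≤
      A (update (update p i s') j t') - A (update (update p i s') j t) := by
  rcases hss'.eq_or_lt with rfl | hss'
  · rfl
  rcases htt'.eq_or_lt with rfl | htt'
  · simp
  exact (hA p hp i j hij hs hss' ht htt').le

theorem HasStrictIncreasingDifferencesOnPos.monotoneOn_sub_update [Fintype ι] {A : (ι → ℝ) → ℝ}
    (hA : HasStrictIncreasingDifferencesOnPos A) (j : ι) {t t' : ℝ} (ht : 0 < t) (htt' : t ≤ t') :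
    MonotoneOn (fun p => A (update p j t') - A (update p j t)) {p | ∀ k, 0 < p k} := by
  refine monotoneOn_of_le_update isUpperSet_positiveOrthant fun p hp i a hia => ?_
  rcases eq_or_ne i j with rfl | hij
  · simp only [update_idem, le_refl]
  · simpa only [update_eq_self] using hA.sub_le_sub hp hij (hp i) hia ht htt'

theorem HasStrictIncreasingDifferencesOnPos.sub_update_lt [Fintype ι] {A : (ι → ℝ) → ℝ}
    (hA : HasStrictIncreasingDifferencesOnPos A) {p q : ι → ℝ} (hp : ∀ k, 0 < p k) (hpq : p ≤ q)
    {i j : ι} (hij : i ≠ j) (hlt : p i < q i) {t t' : ℝ} (ht : 0 < t) (htt' : t < t') :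
    A (update p j t') - A (update p j t) < A (update q j t') - A (update q j t) := by
  have hq : ∀ k, 0 < q k := isUpperSet_positiveOrthant hpq hp
  calc _ ≤ A (update (update q i (p i)) j t') - A (update (update q i (p i)) j t) :=
        hA.monotoneOn_sub_update j ht htt'.le hp (update_pos hq (hp i))
          (le_update_iff.2 ⟨le_rfl, fun k _ => hpq k⟩)
    _ < _ := by simpa only [update_eq_self] using hA q hq i j hij (hp i) hlt ht htt'

theorem HasStrictIncreasingDifferencesOnPos.monotoneOn_sub_piecewise [Fintype ι]
    {A : (ι → ℝ) → ℝ} (hA : HasStrictIncreasingDifferencesOnPos A) (T : Finset ι) {y z : ι → ℝ}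
    (hy : ∀ k, 0 < y k) (hyz : y ≤ z) :
    MonotoneOn (fun c => A (T.piecewise z c) - A (T.piecewise y c)) {c | ∀ k, 0 < c k} := by
  refine monotoneOn_of_le_update isUpperSet_positiveOrthant fun c hc k a hka => ?_
  by_cases hk : k ∈ T
  · have h : ∀ w : ι → ℝ, T.piecewise w (update c k a) = T.piecewise w c := fun w =>
      T.piecewise_congr (fun _ _ => rfl) fun l hl =>
        update_of_ne (ne_of_mem_of_not_mem hk hl).symm ..
    simp only [h, le_refl]
  · have hz : ∀ k, 0 < z k := isUpperSet_positiveOrthant hyz hy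
    have h := hA.monotoneOn_sub_update k (hc k) hka (piecewise_pos hy hc T) (piecewise_pos hz hc T)
      (T.piecewise_le_piecewise hyz le_rfl)
    have hfix : ∀ w, update (T.piecewise w c) k (c k) = T.piecewise w c := fun w =>
      update_eq_self_iff.2 (by simp [hk])
    simp only [hfix] at h
    simp only [← Finset.update_piecewise_of_notMem (hi := hk)]
    linarith

theorem HasStrictIncreasingDifferencesOnPos.sub_piecewise_lt [Fintype ι] {A : (ι → ℝ) → ℝ}
    (hA : HasStrictIncreasingDifferencesOnPos A) {T : Finset ι} {y z c c' : ι → ℝ}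
    (hy : ∀ k, 0 < y k) (hyz : y ≤ z) (hc : ∀ k, 0 < c k) (hcc' : c ≤ c') {i j : ι}
    (hi : i ∈ T) (hj : j ∉ T) (hyzi : y i < z i) (hcc'j : c j < c' j) :
    A (T.piecewise z c) - A (T.piecewise y c) < A (T.piecewise z c') - A (T.piecewise y c') := by
  have hz : ∀ k, 0 < z k := isUpperSet_positiveOrthant hyz hy
  have hc' : ∀ k, 0 < c' k := isUpperSet_positiveOrthant hcc' hc
  calc _ ≤ A (T.piecewise z (update c' j (c j))) - A (T.piecewise y (update c' j (c j))) :=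
        hA.monotoneOn_sub_piecewise T hy hyz hc (update_pos hc' (hc j))
          (le_update_iff.2 ⟨le_rfl, fun k _ => hcc' k⟩)
    _ < _ := by
      have h := hA.sub_update_lt (piecewise_pos hy hc' T) (T.piecewise_le_piecewise hyz le_rfl)
        (ne_of_mem_of_not_mem hi hj) (by simpa [hi] using hyzi) (hc j) hcc'j
      have hfix : ∀ w, update (T.piecewise w c') j (c' j) = T.piecewise w c' := fun w =>
        update_eq_self_iff.2 (by simp [hj])
      simp only [hfix] at h
      simp only [← Finset.update_piecewise_of_notMem (hi := hj)]
      linarith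

def rectIncrement (A : (ι → ℝ) → ℝ) (T : Finset ι) (x b : ι → ℝ) : ℝ :=
  A b + A x - A (T.piecewise x b) - A (T.piecewise b x)

theorem HasStrictIncreasingDifferencesOnPos.rectIncrement_pos [Fintype ι] {A : (ι → ℝ) → ℝ}
    (hA : HasStrictIncreasingDifferencesOnPos A) {T : Finset ι} {i j : ι} (hi : i ∈ T)
    (hj : j ∉ T) {x b : ι → ℝ} (hx : ∀ k, 0 < x k) (hxb : ∀ k, x k < b k) :
    0 < rectIncrement A T x b := by
  have h := hA.sub_piecewise_lt hx (fun k => (hxb k).le) hx (fun k => (hxb k).le) hi hj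
    (hxb i) (hxb j)
  rw [Finset.piecewise_same, Finset.piecewise_same] at h
  unfold rectIncrement
  linarith

theorem HasStrictIncreasingDifferencesOnPos.monotoneOn_rectIncrement [Fintype ι]
    {A : (ι → ℝ) → ℝ} (hA : HasStrictIncreasingDifferencesOnPos A) (T : Finset ι) {x : ι → ℝ}
    (hx : ∀ k, 0 < x k) :
    MonotoneOn (rectIncrement A T x) (Ici x) := by
  intro b hxb b' hxb' hbb'
  have hb : ∀ k, 0 < b k := isUpperSet_positiveOrthant hxb hx
  have hb' : ∀ k, 0 < b' k := isUpperSet_positiveOrthant hxb' hx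
  have h₁ := hA.monotoneOn_sub_piecewise T hx hxb hb hb' hbb'
  have h₂ := hA.monotoneOn_sub_piecewise T hb hbb' hx hb' hxb'
  simp only [Finset.piecewise_same] at h₁ h₂
  -- The increment from `b` to `b'` is the sum of the two block differences `h₁` and `h₂`.
  unfold rectIncrement
  linarith

theorem mixed_deriv_eq_zero_of_eventuallyEq_zero {G : (ι → ℝ) → ℝ} {q : ι → ℝ}
    (hG : G =ᶠ[𝓝 q] 0) (i j : ι) :
    deriv (fun s => deriv (fun t => G (update (update q j s) i t)) (q i)) (q j) = 0 := by
  have hcont : Continuous fun st : ℝ × ℝ => update (update q j st.1) i st.2 :=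
    ((continuous_const : Continuous fun _ : ℝ × ℝ => q).update j continuous_fst).update i
      continuous_snd
  have h : ∀ᶠ st in 𝓝 (q j) ×ˢ 𝓝 (q i), G (update (update q j st.1) i st.2) = 0 := by
    have hq := hcont.tendsto (q j, q i)
    simp only [update_eq_self] at hq
    rw [← nhds_prod_eq]
    exact hq.eventually hG
  refine (Filter.EventuallyEq.deriv_eq (f := fun _ => 0) ?_).trans (deriv_const _ _)
  filter_upwards [h.curry] with s hs
  exact (Filter.EventuallyEq.deriv_eq (f := fun _ => 0) hs).trans (deriv_const _ _)

theorem pos_of_mixed_deriv_log_pos [Finite ι] {F : (ι → ℝ) → ℝ} (hmono : Monotone F)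
    (hnonneg : 0 ≤ F) {i j : ι}
    (hM : ∀ q : ι → ℝ, (∀ k, 0 < q k) →
      0 < deriv (fun s => deriv (fun t => Real.log (F (update (update q j s) i t))) (q i)) (q j))
    {p : ι → ℝ} (hp : ∀ k, 0 < p k) : 0 < F p := by
  refine (hnonneg p).lt_of_ne' fun hFp => ?_
  set p₀ : ι → ℝ := fun k => p k / 2
  -- `F` vanishes below `p`, so near `p₀` the map `log ∘ F` is the junk value `Real.log 0 = 0`.
  have hlog : (fun y => Real.log (F y)) =ᶠ[𝓝 p₀] 0 := by
    filter_upwards [eventually_all.2 fun k => ((continuous_apply k).tendsto p₀).eventually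
      (gt_mem_nhds (half_lt_self (hp k)))] with y hy
    rw [le_antisymm ((hmono fun k => (hy k).le).trans_eq hFp) (hnonneg y)]
    simp
  have h := hM p₀ fun k => half_pos (hp k)
  rw [mixed_deriv_eq_zero_of_eventuallyEq_zero hlog] at h
  exact h.false

end PositiveOrthant

section JointCdf

variable {ι : Type*}

noncomputable def jointCdf (μ : Measure (ι → ℝ)) (x : ι → ℝ) : ℝ :=
  (μ {y | ∀ k, y k ≤ x k}).toReal

theorem jointCdf_le_measure (μ : Measure (ι → ℝ)) [IsFiniteMeasure μ] {x : ι → ℝ}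
    {S : Set (ι → ℝ)} (hS : {y | ∀ k, y k ≤ x k} ⊆ S) : jointCdf μ x ≤ (μ S).toReal :=
  ENNReal.toReal_mono (measure_ne_top _ _) (measure_mono hS)

theorem monotone_jointCdf (μ : Measure (ι → ℝ)) [IsFiniteMeasure μ] : Monotone (jointCdf μ) :=
  fun _ _ hxy => jointCdf_le_measure μ fun _ hy k => (hy k).trans (hxy k)

variable [DecidableEq ι]

theorem tendsto_jointCdf_piecewise_add_natCast [Finite ι] (μ : Measure (ι → ℝ))
    [IsFiniteMeasure μ] (T : Finset ι) (x : ι → ℝ) :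
    Tendsto (fun m : ℕ => jointCdf μ (T.piecewise x (x + m))) atTop
      (𝓝 (μ {y | ∀ k ∈ T, y k ≤ x k}).toReal) := by
  have hmono : Monotone fun m : ℕ => {y : ι → ℝ | ∀ k, y k ≤ T.piecewise x (x + m) k} :=
    fun a b hab y hy k => (hy k).trans <| T.piecewise_le_piecewise le_rfl
      (fun l => by simpa using (Nat.cast_le.2 hab : (a : ℝ) ≤ b)) k
  have hU : ⋃ m : ℕ, {y : ι → ℝ | ∀ k, y k ≤ T.piecewise x (x + m) k} =
      {y | ∀ k ∈ T, y k ≤ x k} := by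
    ext y
    simp only [mem_iUnion, mem_ofPred_eq]
    constructor
    · rintro ⟨m, hm⟩ k hk
      simpa [hk] using hm k
    · intro hy
      obtain ⟨m, hm⟩ := (eventually_all.2 fun k =>
        tendsto_natCast_atTop_atTop.eventually_ge_atTop (y k - x k)).exists
      refine ⟨m, fun k => ?_⟩
      by_cases hk : k ∈ T
      · simpa [hk] using hy k hk
      · simp only [Finset.piecewise_eq_of_notMem _ _ _ hk, Pi.add_apply, Pi.natCast_apply]
        linarith [hm k]
  exact (ENNReal.tendsto_toReal (measure_ne_top _ _)).comp
    (hU ▸ tendsto_measure_iUnion_atTop hmono)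

theorem tendsto_rectIncrement_log_jointCdf [Fintype ι] (μ : Measure (ι → ℝ))
    [IsProbabilityMeasure μ] (T : Finset ι) (x : ι → ℝ)
    (h₁ : (μ {y | ∀ k ∈ T, y k ≤ x k}).toReal ≠ 0)
    (h₂ : (μ {y | ∀ k ∉ T, y k ≤ x k}).toReal ≠ 0) :
    Tendsto (fun m : ℕ => rectIncrement (fun y => Real.log (jointCdf μ y)) T x (x + m)) atTop
      (𝓝 (Real.log (jointCdf μ x) - Real.log (μ {y | ∀ k ∈ T, y k ≤ x k}).toReal -
        Real.log (μ {y | ∀ k ∉ T, y k ≤ x k}).toReal)) := by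
  have hlim₀ := tendsto_jointCdf_piecewise_add_natCast μ ∅ x
  have hlim₂ := tendsto_jointCdf_piecewise_add_natCast μ Tᶜ x
  simp only [Finset.piecewise_empty, Finset.notMem_empty, IsEmpty.forall_iff, implies_true,
    ofPred_true, measure_univ, ENNReal.toReal_one] at hlim₀
  simp only [Finset.piecewise_compl, Finset.mem_compl] at hlim₂
  have h := (((hlim₀.log one_ne_zero).add_const (Real.log (jointCdf μ x))).sub
    ((tendsto_jointCdf_piecewise_add_natCast μ T x).log h₁)).sub (hlim₂.log h₂)
  rw [Real.log_one, zero_add] at h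
  exact h

theorem HasStrictIncreasingDifferencesOnPos.one_lt_jointCdf_div [Fintype ι]
    {μ : Measure (ι → ℝ)} [IsProbabilityMeasure μ]
    (hA : HasStrictIncreasingDifferencesOnPos fun y => Real.log (jointCdf μ y)) {T : Finset ι}
    {i j : ι} (hi : i ∈ T) (hj : j ∉ T) {x : ι → ℝ} (hx : ∀ k, 0 < x k)
    (hFx : 0 < jointCdf μ x) :
    1 < jointCdf μ x /
      ((μ {y | ∀ k ∈ T, y k ≤ x k}).toReal * (μ {y | ∀ k ∉ T, y k ≤ x k}).toReal) := by
  have h₁ := hFx.trans_le (jointCdf_le_measure μ (S := {y | ∀ k ∈ T, y k ≤ x k})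
    fun y hy k _ => hy k)
  have h₂ := hFx.trans_le (jointCdf_le_measure μ (S := {y | ∀ k ∉ T, y k ≤ x k})
    fun y hy k _ => hy k)
  have hpos := hA.rectIncrement_pos hi hj hx (b := x + (1 : ℕ)) (by simp)
  replace hpos := hpos.trans_le <| ge_of_tendsto
    (tendsto_rectIncrement_log_jointCdf μ T x h₁.ne' h₂.ne')
    (eventually_atTop.2 ⟨1, fun m hm => hA.monotoneOn_rectIncrement T hx (by simp) (by simp)
      (add_le_add_right (Nat.mono_cast hm) x)⟩)
  rw [← Real.log_pos_iff (div_pos hFx (mul_pos h₁ h₂)).le, Real.log_div hFx.ne' (mul_pos h₁ h₂).ne',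
    Real.log_mul h₁.ne' h₂.ne']
  linarith

end JointCdf

theorem mtp2_implies_strict_splod_general
    (n : ℕ) (μ : Measure (Fin n → ℝ)) [IsProbabilityMeasure μ]
    (F : (Fin n → ℝ) → ℝ)
    (hF : ∀ x : Fin n → ℝ, F x = (μ {y | ∀ i, y i ≤ x i}).toReal)
    (hC2 : ContDiffOn ℝ 2 F {x | ∀ i, 0 < x i})
    (hMTP2 : ∀ x : Fin n → ℝ, (∀ i, 0 < x i) → ∀ i j : Fin n, i ≠ j →
      0 < deriv (fun s => deriv
            (fun t => Real.log (F (Function.update (Function.update x j s) i t)))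
            (x i)) (x j))
    (I : Finset (Fin n)) (hI : I.Nonempty) (hIp : I ≠ Finset.univ)
    (F₁ F₂ : (Fin n → ℝ) → ℝ)
    (hF₁ : ∀ x : Fin n → ℝ, F₁ x = (μ {y | ∀ k ∈ I, y k ≤ x k}).toReal)
    (hF₂ : ∀ x : Fin n → ℝ, F₂ x = (μ {y | ∀ k, k ∉ I → y k ≤ x k}).toReal)
    (x : Fin n → ℝ) (hx : ∀ i, 0 < x i) :
    1 < F x / (F₁ x * F₂ x) := by
  obtain rfl : F = jointCdf μ := funext hF
  obtain ⟨i, hi⟩ := hI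
  obtain ⟨j, hj⟩ : ∃ j, j ∉ I := by simpa [Finset.eq_univ_iff_forall] using hIp
  have hFpos : ∀ p : Fin n → ℝ, (∀ k, 0 < p k) → 0 < jointCdf μ p := fun p hp =>
    pos_of_mixed_deriv_log_pos (monotone_jointCdf μ) (fun _ => ENNReal.toReal_nonneg)
      (fun q hq => hMTP2 q hq i j (ne_of_mem_of_not_mem hi hj)) hp
  have hA : HasStrictIncreasingDifferencesOnPos fun y => Real.log (jointCdf μ y) :=
    hasStrictIncreasingDifferencesOnPos_of_mixed_deriv_pos
      ((hC2.differentiableOn two_ne_zero).log fun p hp => (hFpos p hp).ne') hMTP2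
  rw [hF₁, hF₂]
  exact hA.one_lt_jointCdf_div hi hj hx (hFpos x hx)

theorem mtp2_implies_strict_splod
    (n : ℕ) (μ : Measure (Fin n → ℝ)) [IsProbabilityMeasure μ]
    (f : (Fin n → ℝ) → ℝ)
    (hμ : μ = volume.withDensity (fun y => ENNReal.ofReal (f y)))
    (hfpos : ∀ y : Fin n → ℝ, (∀ i, 0 < y i) → 0 < f y)
    (hfsupp : ∀ y : Fin n → ℝ, ¬ (∀ i, 0 < y i) → f y = 0)
    (F : (Fin n → ℝ) → ℝ)
    (hF : ∀ x : Fin n → ℝ, F x = (μ {y | ∀ i, y i ≤ x i}).toReal)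
    (hC2 : ContDiffOn ℝ 2 F {x | ∀ i, 0 < x i})
    (hMTP2 : ∀ x : Fin n → ℝ, (∀ i, 0 < x i) → ∀ i j : Fin n, i ≠ j →
      0 < deriv (fun s => deriv
            (fun t => Real.log (F (Function.update (Function.update x j s) i t)))
            (x i)) (x j))
    (I : Finset (Fin n)) (hI : I.Nonempty) (hIp : I ≠ Finset.univ)
    (F₁ F₂ : (Fin n → ℝ) → ℝ)
    (hF₁ : ∀ x : Fin n → ℝ, F₁ x = (μ {y | ∀ k ∈ I, y k ≤ x k}).toReal)
    (hF₂ : ∀ x : Fin n → ℝ, F₂ x = (μ {y | ∀ k, k ∉ I → y k ≤ x k}).toReal)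
    (x : Fin n → ℝ) (hx : ∀ i, 0 < x i) :
    1 < F x / (F₁ x * F₂ x) :=
  mtp2_implies_strict_splod_general n μ F hF hC2 hMTP2 I hI hIp F₁ F₂ hF₁ hF₂ x hx
end
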